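/- The 5-dimensional nilpotent commutative associative algebra A₂₃ degenerates to A₂₄: the structure λ of A₂₄ lies in the closure of the GL(5,ℂ)-orbit O(μ) of the structure μ of A₂₃ (closure in the standard topology on the space of bilinear maps ℂ⁵ × ℂ⁵ → ℂ⁵). -/

import Mathlib

open ContinuousLinearMap

/-- The underlying space `ℂⁿ`. -/
abbrev Vn (n : ℕ) := Fin n → ℂ

/-- The space of bilinear maps `ℂⁿ × ℂⁿ → ℂⁿ` (as continuous linear maps in two
arguments), carrying its standard topology as a finite-dimensional complex vector space. -/
abbrev Bil (n : ℕ) := Vn n →L[ℂ] Vn n →L[ℂ] Vn n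

/-- The action of `GL(n, ℂ)` on bilinear maps: `(g · μ)(x, y) = g (μ (g⁻¹ x) (g⁻¹ y))`. -/
noncomputable def act {n : ℕ} (g : Vn n ≃L[ℂ] Vn n) (μ : Bil n) : Bil n :=
  ((compL ℂ (Vn n) (Vn n) (Vn n)).flip (g.symm : Vn n →L[ℂ] Vn n)).comp
    (((compL ℂ (Vn n) (Vn n) (Vn n)) (g : Vn n →L[ℂ] Vn n)).comp
      (μ.comp (g.symm : Vn n →L[ℂ] Vn n)))

@[simp] lemma act_apply {n : ℕ} (g : Vn n ≃L[ℂ] Vn n) (μ : Bil n) (x y : Vn n) :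
    act g μ x y = g (μ (g.symm x) (g.symm y)) := rfl

/-- The orbit `O(μ)` of a bilinear map under the `GL(n, ℂ)`-action. -/
noncomputable def orbit {n : ℕ} (μ : Bil n) : Set (Bil n) :=
  {ν | ∃ g : Vn n ≃L[ℂ] Vn n, ν = act g μ}

/-- The standard basis `e₁, …, e₅` of `ℂ⁵` (zero-indexed: `e i` is `e_{i+1}`). -/
def e (i : Fin 5) : Vn 5 := Pi.single i 1

/-- Multiplication table of the algebra `𝐀23` (entry `(i, j)` is `eᵢ · eⱼ`). -/
def tblA23 : Fin 5 → Fin 5 → Vn 5 :=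
  ![![0, e 2, 0, 0, 0],
   ![e 2, 0, 0, 0, 0],
   ![0, 0, 0, 0, 0],
   ![0, 0, 0, 0, 0],
   ![0, 0, 0, 0, 0]]

/-- Multiplication table of the algebra `𝐀24` (entry `(i, j)` is `eᵢ · eⱼ`). -/
def tblA24 : Fin 5 → Fin 5 → Vn 5 :=
  ![![e 1, 0, 0, 0, 0],
   ![0, 0, 0, 0, 0],
   ![0, 0, 0, 0, 0],
   ![0, 0, 0, 0, 0],
   ![0, 0, 0, 0, 0]]

open Filter Topology

noncomputable def coordSq {n : ℕ} (i : Fin n) (v : Vn n) : Bil n :=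
  (proj i).smulRight ((proj i).smulRight v)

@[simp] lemma coordSq_apply {n : ℕ} (i : Fin n) (v x y : Vn n) :
    coordSq i v x y = (x i * y i) • v := by
  simp [coordSq, smul_smul]

lemma Bil.apply_eq_sum {n : ℕ} (μ : Bil n) (x y : Vn n) :
    μ x y = ∑ i, ∑ j, (x i * y j) • μ (Pi.single i 1) (Pi.single j 1) := by
  conv_lhs => rw [pi_eq_sum_univ' x, pi_eq_sum_univ' y]
  simp only [map_sum, map_smul, sum_apply, smul_apply, Finset.smul_sum, smul_smul]
  rw [Finset.sum_comm]
  simp_rw [mul_comm (y _)]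

lemma single_one_eq_e (i : Fin 5) : Pi.single i 1 = e i := rfl

lemma apply_eq_of_tblA23 {μ : Bil 5} (hμ : ∀ i j : Fin 5, μ (e i) (e j) = tblA23 i j)
    (x y : Vn 5) : μ x y = (x 0 * y 1 + x 1 * y 0) • e 2 := by
  simp [Bil.apply_eq_sum μ x y, Fin.sum_univ_five, single_one_eq_e, hμ, tblA23, add_smul]

lemma apply_eq_of_tblA24 {lam : Bil 5} (hlam : ∀ i j : Fin 5, lam (e i) (e j) = tblA24 i j)
    (x y : Vn 5) : lam x y = (x 0 * y 0) • e 1 := by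
  simp [Bil.apply_eq_sum lam x y, Fin.sum_univ_five, single_one_eq_e, hlam, tblA24]

/-- The change of basis to `f₁ = e₁ + e₂`, `f₂ = 2e₃`, `f₃ = t(e₁ - e₂)`, `f₄ = e₄`, `f₅ = e₅`.
In `𝐀23`, `f₁² = f₂`, `f₁f₃ = 0` and `f₃² = -t² f₂`, so as `t → 0` the table of `𝐀23` in
these bases tends to that of `𝐀24`. -/
noncomputable def frame (t : ℂ) (ht : t ≠ 0) : Vn 5 ≃L[ℂ] Vn 5 :=
  LinearEquiv.toContinuousLinearEquiv
    { toFun := fun x => ![x 0 + t * x 2, x 0 - t * x 2, 2 * x 1, x 3, x 4]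
      invFun := fun y => ![(y 0 + y 1) / 2, y 2 / 2, (y 0 - y 1) / (2 * t), y 3, y 4]
      map_add' := fun x y => by ext i; fin_cases i <;> simp <;> ring
      map_smul' := fun c x => by ext i; fin_cases i <;> simp <;> ring
      left_inv := fun x => by ext i; fin_cases i <;> simp; field_simp; ring
      right_inv := fun y => by ext i; fin_cases i <;> simp <;> field_simp <;> ring }

lemma frame_apply (t : ℂ) (ht : t ≠ 0) (x : Vn 5) :
    frame t ht x = ![x 0 + t * x 2, x 0 - t * x 2, 2 * x 1, x 3, x 4] := rfl

lemma frame_symm_e2 (t : ℂ) (ht : t ≠ 0) : (frame t ht).symm (e 2) = (2⁻¹ : ℂ) • e 1 := by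
  ext i; fin_cases i <;> simp [frame, e]

lemma act_frame_symm {μ lam : Bil 5} (hμ : ∀ i j : Fin 5, μ (e i) (e j) = tblA23 i j)
    (hlam : ∀ i j : Fin 5, lam (e i) (e j) = tblA24 i j) (t : ℂ) (ht : t ≠ 0) :
    act (frame t ht).symm μ = lam - t ^ 2 • coordSq 2 (e 1) := by
  ext x y : 2
  simp only [act_apply, ContinuousLinearEquiv.symm_symm, apply_eq_of_tblA23 hμ, frame_apply,
    map_smul, frame_symm_e2, sub_apply, smul_apply, apply_eq_of_tblA24 hlam, coordSq_apply,
    Matrix.cons_val_zero, Matrix.cons_val_one]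
  module

lemma tendsto_sub_sq_smul {R M : Type*} [Semiring R] [TopologicalSpace R] [ContinuousMul R]
    [AddCommGroup M] [TopologicalSpace M] [IsTopologicalAddGroup M] [Module R M]
    [ContinuousSMul R M] (a b : M) :
    Tendsto (fun t : R => a - t ^ 2 • b) (𝓝 0) (𝓝 a) := by
  have hcont : Continuous fun t : R => a - t ^ 2 • b := by fun_prop
  simpa using hcont.tendsto 0

/-- The $5$-dimensional nilpotent commutative associative algebra `𝐀23` degenerates to
`𝐀24`: the structure `λ` of `𝐀24` lies in the closure of
the `GL(5, ℂ)`-orbit `O(μ)` of the structure `μ` of `𝐀23`. -/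
theorem A23_deg_A24 (μ lam : Bil 5)
    (hμ : ∀ i j : Fin 5, μ (e i) (e j) = tblA23 i j)
    (hlam : ∀ i j : Fin 5, lam (e i) (e j) = tblA24 i j) :
    lam ∈ closure (orbit μ) := by
  have hlim : Tendsto (fun t : ℂ => lam - t ^ 2 • coordSq 2 (e 1)) (𝓝[≠] 0) (𝓝 lam) :=
    (tendsto_sub_sq_smul lam _).mono_left nhdsWithin_le_nhds
  refine mem_closure_of_tendsto hlim ?_
  filter_upwards [self_mem_nhdsWithin] with t ht
  exact ⟨(frame t ht).symm, (act_frame_symm hμ hlam t ht).symm⟩
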